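/- Positivity of the partial transpose is necessary for separability: if ρ = Σ_{p=1}^{s} w^p · (ρ_{A,p} ⊗ ρ_{B,p}) with w^p ≥ 0 and each ρ_{A,p}, ρ_{B,p} a 2×2 positive semidefinite Hermitian matrix, then both partial transposes ρ^{T₁} and ρ^{T₂} are positive semidefinite. -/

import Mathlib

open Matrix Kronecker ComplexOrder

/-- Partial transpose on the first qubit: `(ρ^{T₁})_{(a,c),(b,d)} = ρ_{(b,c),(a,d)}`. -/
def PT1 (ρ : Matrix (Fin 2 × Fin 2) (Fin 2 × Fin 2) ℂ) :
    Matrix (Fin 2 × Fin 2) (Fin 2 × Fin 2) ℂ :=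
  Matrix.of fun p q => ρ (q.1, p.2) (p.1, q.2)

/-- Partial transpose on the second qubit: `(ρ^{T₂})_{(a,c),(b,d)} = ρ_{(a,d),(b,c)}`. -/
def PT2 (ρ : Matrix (Fin 2 × Fin 2) (Fin 2 × Fin 2) ℂ) :
    Matrix (Fin 2 × Fin 2) (Fin 2 × Fin 2) ℂ :=
  Matrix.of fun p q => ρ (p.1, q.2) (q.1, p.2)

/-
Each partial transpose is linear and transposes one factor of a product state,
`(A ⊗ B)^{T₁} = Aᵀ ⊗ B` and `(A ⊗ B)^{T₂} = A ⊗ Bᵀ`. So the partial transpose of a separable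
state is again a nonnegative combination of Kronecker products of positive semidefinite
matrices, because transposition preserves positive semidefiniteness, and such combinations
are positive semidefinite.
-/

section PartialTranspose

variable (ρ : Matrix (Fin 2 × Fin 2) (Fin 2 × Fin 2) ℂ) (c : ℂ) (A B : Matrix (Fin 2) (Fin 2) ℂ)

lemma PT1_smul : PT1 (c • ρ) = c • PT1 ρ := rfl

lemma PT2_smul : PT2 (c • ρ) = c • PT2 ρ := rfl

lemma PT1_sum {ι : Type*} (s : Finset ι) (f : ι → Matrix (Fin 2 × Fin 2) (Fin 2 × Fin 2) ℂ) :
    PT1 (∑ i ∈ s, f i) = ∑ i ∈ s, PT1 (f i) := by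
  ext p q
  simp only [PT1, of_apply, Matrix.sum_apply]

lemma PT2_sum {ι : Type*} (s : Finset ι) (f : ι → Matrix (Fin 2 × Fin 2) (Fin 2 × Fin 2) ℂ) :
    PT2 (∑ i ∈ s, f i) = ∑ i ∈ s, PT2 (f i) := by
  ext p q
  simp only [PT2, of_apply, Matrix.sum_apply]

lemma PT1_kronecker : PT1 (A ⊗ₖ B) = Aᵀ ⊗ₖ B := rfl

lemma PT2_kronecker : PT2 (A ⊗ₖ B) = A ⊗ₖ Bᵀ := rfl

end PartialTranspose

theorem Matrix.posSemidef_sum_smul_kronecker {𝕜 ι m n : Type*} [RCLike 𝕜]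
    [Finite m] [Finite n] (s : Finset ι) (w : ι → ℝ)
    (A : ι → Matrix m m 𝕜) (B : ι → Matrix n n 𝕜)
    (hw : ∀ i, 0 ≤ w i) (hA : ∀ i, (A i).PosSemidef) (hB : ∀ i, (B i).PosSemidef) :
    (∑ i ∈ s, (w i : 𝕜) • (A i ⊗ₖ B i)).PosSemidef :=
  posSemidef_sum s fun i _ => ((hA i).kronecker (hB i)).smul (RCLike.ofReal_nonneg.mpr (hw i))

theorem stmt_11 (s : ℕ) (w : Fin s → ℝ) (ρA ρB : Fin s → Matrix (Fin 2) (Fin 2) ℂ)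
    (hw : ∀ p, 0 ≤ w p)
    (hA : ∀ p, (ρA p).IsHermitian ∧ (ρA p).PosSemidef)
    (hB : ∀ p, (ρB p).IsHermitian ∧ (ρB p).PosSemidef)
    (ρ : Matrix (Fin 2 × Fin 2) (Fin 2 × Fin 2) ℂ)
    (hρ : ρ = ∑ p : Fin s, (w p : ℂ) • (ρA p ⊗ₖ ρB p)) :
    (PT1 ρ).PosSemidef ∧ (PT2 ρ).PosSemidef := by
  subst hρ
  simp only [PT1_sum, PT2_sum, PT1_smul, PT2_smul, PT1_kronecker, PT2_kronecker]
  constructor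
  · exact posSemidef_sum_smul_kronecker _ w _ _ hw (fun p => (hA p).2.transpose) fun p => (hB p).2
  · exact posSemidef_sum_smul_kronecker _ w _ _ hw (fun p => (hA p).2) fun p => (hB p).2.transpose
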